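/- Let (M, 𝒜) be an uncertainty matroid on a finite ground set E that admits a uniformly optimal basis, and let e ∈ E be uncertain. Then e is blue if and only if e belongs to every uniformly optimal basis of (M, 𝒜), and e is red if and only if e belongs to no uniformly optimal basis of (M, 𝒜). -/

import Mathlib

open Matroid

variable {α : Type*}

/-- `A` is an uncertainty area function for `M`: each element of the ground set gets a
nonempty bounded set of reals. -/
def IsAreaFun (M : Matroid α) (A : α → Set ℝ) : Prop :=
  ∀ e ∈ M.E, (A e).Nonempty ∧ BddBelow (A e) ∧ BddAbove (A e)

/-- A realization: a weight function with `w e ∈ A e` for every element of the ground set. -/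
def Realization (M : Matroid α) (A : α → Set ℝ) (w : α → ℝ) : Prop :=
  ∀ e ∈ M.E, w e ∈ A e

/-- The total `w`-weight of a set. -/
noncomputable def setWeight (w : α → ℝ) (T : Set α) : ℝ := ∑ᶠ e ∈ T, w e

/-- A `w`-basis: a basis of `M` of minimum total `w`-weight. -/
def IsMinBasis (M : Matroid α) (w : α → ℝ) (T : Set α) : Prop :=
  M.IsBase T ∧ ∀ B, M.IsBase B → setWeight w T ≤ setWeight w B

/-- A uniformly optimal basis (an `A`-basis): a `w`-basis for every realization `w`. -/
def IsUOB (M : Matroid α) (A : α → Set ℝ) (T : Set α) : Prop :=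
  ∀ w, Realization M A w → IsMinBasis M w T

/-- An element is certain if its area is a singleton. -/
def Certain (A : α → Set ℝ) (e : α) : Prop := ∃ r : ℝ, A e = {r}

/-- `e` is blue if every realization admits a minimum weight basis containing `e`. -/
def Blue (M : Matroid α) (A : α → Set ℝ) (e : α) : Prop :=
  ∀ w, Realization M A w → ∃ T, IsMinBasis M w T ∧ e ∈ T

/-- `e` is red if every realization admits a minimum weight basis avoiding `e`. -/
def Red (M : Matroid α) (A : α → Set ℝ) (e : α) : Prop :=
  ∀ w, Realization M A w → ∃ T, IsMinBasis M w T ∧ e ∉ T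

/-- `e` is colored if it is blue or red. -/
def Colored (M : Matroid α) (A : α → Set ℝ) (e : α) : Prop :=
  Blue M A e ∨ Red M A e

/-! Since `e` is uncertain, its area holds two values `x < y`. If a uniformly optimal
basis `T` avoided a blue `e`, take a realization with `w e = y` and a `w`-basis `S ∋ e`, then
lower `e` to `x`: `S` becomes strictly lighter than `T`, which is impossible as `T` stays optimal.
Symmetrically, if `T ∋ e` for a red `e`, raising `e` from `x` to `y` makes `T` strictly heavier
than a basis avoiding `e`. The converse directions just use the given uniformly optimal basis. -/

lemma exists_lt_of_not_certain {A : α → Set ℝ} {e : α} (hne : (A e).Nonempty)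
    (hu : ¬ Certain A e) : ∃ x ∈ A e, ∃ y ∈ A e, x < y :=
  (hne.exists_eq_singleton_or_nontrivial.resolve_left hu).exists_lt

lemma IsAreaFun.exists_realization {M : Matroid α} {A : α → Set ℝ} (hA : IsAreaFun M A) :
    ∃ w, Realization M A w := by
  classical
  exact ⟨fun a ↦ if h : a ∈ M.E then (hA a h).1.some else 0,
    fun a ha ↦ by simpa only [dif_pos ha] using (hA a ha).1.some_mem⟩

lemma Realization.update [DecidableEq α] {M : Matroid α} {A : α → Set ℝ} {w : α → ℝ} {e : α}
    {v : ℝ} (hw : Realization M A w) (hv : v ∈ A e) :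
    Realization M A (Function.update w e v) := by
  intro a ha
  rcases eq_or_ne a e with rfl | hne
  · simpa using hv
  · simpa [Function.update_of_ne hne] using hw a ha

section setWeight

variable [DecidableEq α] {w : α → ℝ} {e : α} {v : ℝ} {S : Set α}

lemma setWeight_update_of_notMem (he : e ∉ S) :
    setWeight (Function.update w e v) S = setWeight w S :=
  finsum_mem_congr rfl fun _ ha ↦ Function.update_of_ne (ne_of_mem_of_not_mem ha he) _ _

lemma setWeight_update_of_mem (hS : S.Finite) (he : e ∈ S) :
    setWeight (Function.update w e v) S = setWeight w S - w e + v := by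
  rw [setWeight, setWeight, finsum_mem_eq_finite_toFinset_sum _ hS,
    finsum_mem_eq_finite_toFinset_sum _ hS, Finset.sum_update_of_mem (hS.mem_toFinset.2 he),
    ← Finset.sum_erase_add _ _ (hS.mem_toFinset.2 he), ← Finset.sdiff_singleton_eq_erase]
  ring

end setWeight

lemma IsMinBasis.not_isMinBasis_update [DecidableEq α] {M : Matroid α} [M.RankFinite]
    {w : α → ℝ} {S T : Set α} {e : α} {v : ℝ} (hS : IsMinBasis M w S) (heS : e ∈ S)
    (heT : e ∉ T) (hT : M.IsBase T) (hv : v < w e) :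
    ¬ IsMinBasis M (Function.update w e v) T := by
  intro hT'
  have hST := hS.2 T hT
  have hTS := hT'.2 S hS.1
  rw [setWeight_update_of_notMem heT, setWeight_update_of_mem hS.1.finite heS] at hTS
  linarith

section UOB

variable {M : Matroid α} [M.RankFinite] {A : α → Set ℝ} {T : Set α} {e : α} {w : α → ℝ}
  {x y : ℝ}

lemma Blue.mem_of_isUOB (hblue : Blue M A e) (hT : IsUOB M A T) (hw : Realization M A w)
    (hx : x ∈ A e) (hy : y ∈ A e) (hxy : x < y) : e ∈ T := by
  classical
  by_contra heT
  have hw₂ := hw.update hy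
  obtain ⟨S, hS, heS⟩ := hblue _ hw₂
  exact hS.not_isMinBasis_update heS heT (hT _ hw₂).1 (by simpa using hxy)
    (hT _ (hw₂.update hx))

lemma Red.notMem_of_isUOB (hred : Red M A e) (hT : IsUOB M A T) (hw : Realization M A w)
    (hx : x ∈ A e) (hy : y ∈ A e) (hxy : x < y) : e ∉ T := by
  classical
  intro heT
  have hw₂ := hw.update hy
  obtain ⟨S, hS, heS⟩ := hred _ (hw₂.update hx)
  exact (hT _ hw₂).not_isMinBasis_update heT heS hS.1 (by simpa using hxy) hS

end UOB

lemma IsUOB.blue_of_mem {M : Matroid α} {A : α → Set ℝ} {T : Set α} {e : α}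
    (hT : IsUOB M A T) (he : e ∈ T) : Blue M A e :=
  fun w hw ↦ ⟨T, hT w hw, he⟩

lemma IsUOB.red_of_notMem {M : Matroid α} {A : α → Set ℝ} {T : Set α} {e : α}
    (hT : IsUOB M A T) (he : e ∉ T) : Red M A e :=
  fun w hw ↦ ⟨T, hT w hw, he⟩

/-- An uncertain element is blue iff it is in every uniformly optimal basis, and red iff
it is in no uniformly optimal basis. -/
theorem uncertain_blue_red_iff (M : Matroid α) (A : α → Set ℝ)
    (hE : M.E.Finite) (hA : IsAreaFun M A)
    (hex : ∃ T, IsUOB M A T) (e : α) (he : e ∈ M.E) (hu : ¬ Certain A e) :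
    (Blue M A e ↔ ∀ T, IsUOB M A T → e ∈ T) ∧
    (Red M A e ↔ ∀ T, IsUOB M A T → e ∉ T) := by
  have : M.Finite := ⟨hE⟩
  obtain ⟨T₀, hT₀⟩ := hex
  obtain ⟨x, hx, y, hy, hxy⟩ := exists_lt_of_not_certain (hA e he).1 hu
  obtain ⟨w, hw⟩ := hA.exists_realization
  exact ⟨⟨fun hblue _ hT ↦ hblue.mem_of_isUOB hT hw hx hy hxy,
      fun h ↦ hT₀.blue_of_mem (h T₀ hT₀)⟩,
    ⟨fun hred _ hT ↦ hred.notMem_of_isUOB hT hw hx hy hxy,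
      fun h ↦ hT₀.red_of_notMem (h T₀ hT₀)⟩⟩
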